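/- For any two multi-permutations σ, π ∈ S(M), the Manhattan distance between their images under ψ is at most their Kendall τ-distance: d_M(ψ(σ), ψ(π)) ≤ d_K(σ, π). -/

import Mathlib

/-- `AdjTrans σ π` : the sequence `π` is obtained from the sequence `σ` by exchanging
two distinct adjacent elements (an adjacent transposition). -/
def AdjTrans (σ π : List ℤ) : Prop :=
  ∃ (l₁ l₂ : List ℤ) (a b : ℤ), a ≠ b ∧ σ = l₁ ++ a :: b :: l₂ ∧ π = l₁ ++ b :: a :: l₂

/-- `StepsTo n σ π` : `π` can be obtained from `σ` by a sequence of `n` adjacent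
transpositions. -/
def StepsTo : ℕ → List ℤ → List ℤ → Prop
  | 0 => fun σ π => σ = π
  | n + 1 => fun σ π => ∃ τ, AdjTrans σ τ ∧ StepsTo n τ π

/-- The Kendall τ-distance between two sequences: the minimum number of adjacent
transpositions needed to transform one into the other. -/
noncomputable def dK (σ π : List ℤ) : ℕ := sInf {n | StepsTo n σ π}

/-- The list `[a, a+1, ..., a+len-1]` of integers. -/
def rangeList (a len : ℕ) : List ℤ := (List.range' a len).map (fun x => (x : ℤ))

/-- The substitution map `T_θ`: the `r`-th occurrence (from the left, `0`-indexed) of a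
rank `a` in `σ` is replaced by the `r`-th entry of the list `θ a`. -/
def Tmap (θ : ℤ → List ℤ) (σ : List ℤ) : List ℤ :=
  (List.range σ.length).map (fun j =>
    (θ (σ.getD j 0)).getD ((σ.take j).count (σ.getD j 0)) 0)

/-- `psiEntry σ a s` : the number of positions in `σ` strictly to the right of the `s`-th
occurrence (`0`-indexed) of `a` in `σ` that hold an element smaller than `a`. -/
def psiEntry (σ : List ℤ) (a : ℤ) (s : ℕ) : ℕ :=
  (σ.drop (((σ.indexesOf a).getD s σ.length) + 1)).countP (fun x => decide (x < a))

/-- The Manhattan distance between two vectors of naturals (presented as lists). -/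
def manhattanL (x y : List ℕ) : ℕ :=
  ∑ i ∈ Finset.range (max x.length y.length), ((x.getD i 0 : ℤ) - (y.getD i 0 : ℤ)).natAbs

/-- The Lee distance over `Z_q` between two vectors with entries in `{0, …, q-1}`
(presented as lists). -/
def leeDistL (q : ℕ) (x y : List ℕ) : ℕ :=
  ∑ i ∈ Finset.range (max x.length y.length),
    min (((x.getD i 0 : ℤ) - (y.getD i 0 : ℤ)).natAbs)
      (q - ((x.getD i 0 : ℤ) - (y.getD i 0 : ℤ)).natAbs)

/-- The Lee distance between two vectors over `ZMod q`. -/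
def zmodLee {q N : ℕ} (x y : Fin N → ZMod q) : ℕ :=
  ∑ i, min (x i - y i).val (y i - x i).val

/-- `permList k σ` : `σ` is (an ordering representing) a permutation of `{1, …, k}`. -/
def permList (k : ℕ) (σ : List ℤ) : Prop :=
  (↑σ : Multiset ℤ) = (↑(rangeList 1 k) : Multiset ℤ)

/-- The multiset `M_{k,r} = {0^k, k+1, …, k+r}`. -/
def Mkr (k r : ℕ) : Multiset ℤ :=
  Multiset.replicate k (0 : ℤ) + (↑(rangeList (k + 1) r) : Multiset ℤ)

/-- `α_{↓k}` : delete from `α` all elements larger than `k`. -/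
def restrictTo (k : ℕ) (α : List ℤ) : List ℤ :=
  α.filter (fun x => decide (x ≤ (k : ℤ)))

/-- `α_{k↦0}` : replace in `α` every element of `{1, …, k}` by `0`. -/
def mapToZero (k : ℕ) (α : List ℤ) : List ℤ :=
  α.map (fun x => if 1 ≤ x ∧ x ≤ (k : ℤ) then 0 else x)

/-- `star σ ρ = σ ∗ ρ` : replace the zeros of `ρ`, from left to right, by the elements
of `σ` in order. -/
def starP : List ℤ → List ℤ → List ℤ
  | _, [] => []
  | σ, x :: ρ' => if x = 0 then σ.headD 0 :: starP σ.tail ρ' else x :: starP σ ρ'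

/-! An adjacent transposition of two distinct entries `a < b` changes exactly one coordinate of
`ψ`, the one of the occurrence of `b` that moves, and changes it by one: every other occurrence
keeps the same set of smaller entries to its right. Multi-permutations of the same multiset are
joined by a chain of `d_K(σ, π)` adjacent transpositions, so the triangle inequality for `d_M`
gives the bound. -/

section KendallDistance

theorem StepsTo.trans : ∀ {m n : ℕ} {σ τ π : List ℤ},
    StepsTo m σ τ → StepsTo n τ π → StepsTo (m + n) σ π
  | 0, _, _, _, _, (h : _ = _), h' => by rw [h, Nat.zero_add]; exact h'
  | _ + 1, _, _, _, _, ⟨ρ, hρ, h⟩, h' => by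
    rw [Nat.add_right_comm]; exact ⟨ρ, hρ, h.trans h'⟩

theorem StepsTo.cons (x : ℤ) : ∀ {n : ℕ} {σ π : List ℤ},
    StepsTo n σ π → StepsTo n (x :: σ) (x :: π)
  | 0, _, _, (h : _ = _) => congrArg (x :: ·) h
  | _ + 1, _, _, ⟨_, ⟨l₁, l₂, a, b, hab, rfl, rfl⟩, h⟩ =>
    ⟨_, ⟨x :: l₁, l₂, a, b, hab, rfl, rfl⟩, h.cons x⟩

theorem exists_stepsTo_of_perm {σ π : List ℤ} (h : σ.Perm π) : ∃ n, StepsTo n σ π := by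
  induction h with
  | nil => exact ⟨0, rfl⟩
  | cons x _ ih =>
    obtain ⟨n, hn⟩ := ih
    exact ⟨n, hn.cons x⟩
  | swap x y l =>
    by_cases hxy : y = x
    · exact ⟨0, by rw [hxy]; rfl⟩
    · exact ⟨1, _, ⟨[], l, y, x, hxy, rfl, rfl⟩, rfl⟩
  | trans _ _ ih₁ ih₂ =>
    obtain ⟨n₁, h₁⟩ := ih₁
    obtain ⟨n₂, h₂⟩ := ih₂
    exact ⟨n₁ + n₂, h₁.trans h₂⟩

theorem stepsTo_dK {σ π : List ℤ} (h : σ.Perm π) : StepsTo (dK σ π) σ π :=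
  Nat.sInf_mem (exists_stepsTo_of_perm h)

end KendallDistance

section PsiEntry

theorem psiEntry_eq (σ : List ℤ) (a : ℤ) (s : ℕ) :
    psiEntry σ a s = (σ.drop ((σ.idxsOf a).getD s σ.length + 1)).countP (· < a) := rfl

theorem getD_idxsOf_cons (x c : ℤ) (l : List ℤ) (s : ℕ) :
    ((x :: l).idxsOf c).getD s (x :: l).length =
      if x = c then (0 :: (l.idxsOf c).map (· + 1)).getD s (l.length + 1)
      else ((l.idxsOf c).map (· + 1)).getD s (l.length + 1) := by
  simp only [List.idxsOf_cons, List.idxsOf_start (s := 0 + 1), List.length_cons, beq_iff_eq,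
    zero_add]
  split_ifs <;> rfl

theorem psiEntry_cons_of_ne {x c : ℤ} (h : x ≠ c) (l : List ℤ) (s : ℕ) :
    psiEntry (x :: l) c s = psiEntry l c s := by
  rw [psiEntry_eq, getD_idxsOf_cons, if_neg h, List.getD_map, List.drop_succ_cons, psiEntry_eq]

theorem psiEntry_cons_self_zero (c : ℤ) (l : List ℤ) :
    psiEntry (c :: l) c 0 = l.countP (· < c) := by
  rw [psiEntry_eq, getD_idxsOf_cons, if_pos rfl]
  rfl

theorem psiEntry_cons_self_succ (c : ℤ) (l : List ℤ) (s : ℕ) :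
    psiEntry (c :: l) c (s + 1) = psiEntry l c s := by
  rw [psiEntry_eq, getD_idxsOf_cons, if_pos rfl, List.getD_cons_succ, List.getD_map,
    List.drop_succ_cons, psiEntry_eq]

theorem countP_append_swap (p : ℤ → Bool) (a b : ℤ) (l₁ l₂ : List ℤ) :
    (l₁ ++ b :: a :: l₂).countP p = (l₁ ++ a :: b :: l₂).countP p :=
  ((List.Perm.swap a b l₂).append_left l₁).countP_eq p

theorem psiEntry_swap {a b : ℤ} (hab : a < b) (l₁ l₂ : List ℤ) (c : ℤ) (s : ℕ) :
    psiEntry (l₁ ++ b :: a :: l₂) c s =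
      psiEntry (l₁ ++ a :: b :: l₂) c s + if c = b ∧ s = l₁.count b then 1 else 0 := by
  induction l₁ generalizing s with
  | nil =>
    simp only [List.nil_append, List.count_nil]
    by_cases hcb : c = b
    · subst hcb
      cases s with
      | zero =>
        rw [psiEntry_cons_self_zero, psiEntry_cons_of_ne hab.ne, psiEntry_cons_self_zero,
          List.countP_cons]
        simp [hab]
      | succ s =>
        rw [psiEntry_cons_self_succ, psiEntry_cons_of_ne hab.ne, psiEntry_cons_of_ne hab.ne,
          psiEntry_cons_self_succ]
        simp
    · by_cases hca : c = a
      · subst hca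
        cases s with
        | zero =>
          rw [psiEntry_cons_of_ne hab.ne', psiEntry_cons_self_zero, psiEntry_cons_self_zero,
            List.countP_cons]
          simp [hab.le, hcb]
        | succ s =>
          rw [psiEntry_cons_of_ne hab.ne', psiEntry_cons_self_succ, psiEntry_cons_self_succ,
            psiEntry_cons_of_ne hab.ne']
          simp
      · rw [psiEntry_cons_of_ne (Ne.symm hcb), psiEntry_cons_of_ne (Ne.symm hca),
          psiEntry_cons_of_ne (Ne.symm hca), psiEntry_cons_of_ne (Ne.symm hcb)]
        simp [hcb]
  | cons x l₁ ih =>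
    simp only [List.cons_append]
    by_cases hxc : x = c
    · subst hxc
      cases s with
      | zero =>
        rw [psiEntry_cons_self_zero, psiEntry_cons_self_zero, countP_append_swap,
          if_neg (fun h => by simp [h.1] at h), Nat.add_zero]
      | succ s =>
        rw [psiEntry_cons_self_succ, psiEntry_cons_self_succ, ih]
        by_cases hxb : x = b <;> simp [hxb]
    · rw [psiEntry_cons_of_ne hxc, psiEntry_cons_of_ne hxc, ih]
      by_cases hcb : c = b
      · subst hcb; simp [hxc]
      · simp [hcb]

theorem AdjTrans.exists_natAbs_psiEntry_sub {σ τ : List ℤ} (h : AdjTrans σ τ) :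
    ∃ b k, ∀ c s, ((psiEntry σ c s : ℤ) - psiEntry τ c s).natAbs =
      if c = b ∧ s = k then 1 else 0 := by
  obtain ⟨l₁, l₂, a, b, hab, rfl, rfl⟩ := h
  rcases hab.lt_or_gt with hlt | hgt
  · refine ⟨b, l₁.count b, fun c s => ?_⟩
    rw [psiEntry_swap hlt]
    split_ifs <;> simp
  · refine ⟨a, l₁.count a, fun c s => ?_⟩
    rw [psiEntry_swap hgt]
    split_ifs <;> simp

end PsiEntry

section Manhattan

theorem manhattanL_cons (x y : ℕ) (xs ys : List ℕ) :
    manhattanL (x :: xs) (y :: ys) = ((x : ℤ) - y).natAbs + manhattanL xs ys := by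
  unfold manhattanL
  rw [List.length_cons, List.length_cons, Nat.succ_max_succ, Finset.sum_range_succ', add_comm]
  simp only [List.getD_cons_succ, List.getD_cons_zero]

theorem manhattanL_map {α : Type*} (f g : α → ℕ) (L : List α) :
    manhattanL (L.map f) (L.map g) = (L.map fun a => ((f a : ℤ) - g a).natAbs).sum := by
  induction L with
  | nil => simp [manhattanL]
  | cons a L ih => rw [List.map_cons, List.map_cons, manhattanL_cons, ih, List.map_cons,
      List.sum_cons]

theorem manhattanL_self (x : List ℕ) : manhattanL x x = 0 := by
  simp [manhattanL]

theorem manhattanL_triangle {x y z : List ℕ} (hxy : x.length = y.length)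
    (hyz : y.length = z.length) : manhattanL x z ≤ manhattanL x y + manhattanL y z := by
  unfold manhattanL
  rw [hxy, hyz, Nat.max_self, ← Finset.sum_add_distrib]
  refine Finset.sum_le_sum fun i _ => ?_
  rw [← sub_add_sub_cancel _ (y.getD i 0 : ℤ)]
  exact Int.natAbs_add_le _ _

theorem List.sum_map_le_one_of_nodup {α : Type*} {L : List α} (hL : L.Nodup) (h : α → ℕ)
    (hle : ∀ a ∈ L, h a ≤ 1) (huniq : ∀ a ∈ L, ∀ b ∈ L, h a ≠ 0 → h b ≠ 0 → a = b) :
    (L.map h).sum ≤ 1 := by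
  classical
  by_cases hex : ∃ a ∈ L, h a ≠ 0
  · obtain ⟨a, ha, ha0⟩ := hex
    rw [← List.sum_toFinset h hL, Finset.sum_eq_single_of_mem a (List.mem_toFinset.mpr ha)
      fun b hb hba => by_contra fun hb0 => hba (huniq b (List.mem_toFinset.mp hb) a ha hb0 ha0)]
    exact hle a ha
  · simp only [not_exists, not_and, not_not] at hex
    rw [List.sum_eq_zero (by simpa using hex)]
    exact zero_le_one

end Manhattan

section Psi

variable (ℓ : ℕ) (v : ℕ → ℤ) (m : ℕ → ℕ)

def psiIndex : List (ℕ × ℕ) :=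
  ((List.range ℓ).drop 1).flatMap fun i => (List.range (m i)).map (Prod.mk i)

def psiVec (σ : List ℤ) : List ℕ :=
  (((List.range ℓ).drop 1).map
    (fun i => (List.range (m i)).map (fun s => psiEntry σ (v i) s))).flatten

theorem psiVec_eq_map (σ : List ℤ) :
    psiVec ℓ v m σ = (psiIndex ℓ m).map fun p => psiEntry σ (v p.1) p.2 := by
  simp [psiVec, psiIndex, List.flatMap, List.map_flatten, Function.comp_def]

theorem nodup_psiIndex : (psiIndex ℓ m).Nodup := by
  refine List.nodup_flatMap.mpr ⟨fun i _ => List.nodup_range.map (Prod.mk_right_injective i), ?_⟩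
  refine (List.nodup_range.sublist (List.drop_sublist 1 _)).imp fun hij p hi hj => hij ?_
  simp only [List.mem_map] at hi hj
  obtain ⟨_, _, rfl⟩ := hi
  obtain ⟨_, _, hp⟩ := hj
  exact (congrArg Prod.fst hp).symm

variable {ℓ m} in
theorem fst_lt_of_mem_psiIndex {p : ℕ × ℕ} (hp : p ∈ psiIndex ℓ m) : p.1 < ℓ := by
  simp only [psiIndex, List.mem_flatMap, List.mem_map] at hp
  obtain ⟨i, hi, s, _, rfl⟩ := hp
  exact List.mem_range.mp (List.mem_of_mem_drop hi)

theorem length_psiVec (σ τ : List ℤ) : (psiVec ℓ v m σ).length = (psiVec ℓ v m τ).length := by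
  simp [psiVec_eq_map]

variable {ℓ v}

theorem manhattanL_psiVec_le_one_of_adjTrans (hv : Set.InjOn v (Set.Iio ℓ)) {σ τ : List ℤ}
    (h : AdjTrans σ τ) : manhattanL (psiVec ℓ v m σ) (psiVec ℓ v m τ) ≤ 1 := by
  obtain ⟨b, k, hbk⟩ := h.exists_natAbs_psiEntry_sub
  rw [psiVec_eq_map, psiVec_eq_map, manhattanL_map]
  refine List.sum_map_le_one_of_nodup (nodup_psiIndex ℓ m) _
    (fun p _ => by rw [hbk]; split_ifs <;> simp) fun p hp q hq hp0 hq0 => ?_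
  simp only [hbk, ne_eq, ite_eq_right_iff, Classical.not_imp] at hp0 hq0
  obtain ⟨⟨hpb, hpk⟩, -⟩ := hp0
  obtain ⟨⟨hqb, hqk⟩, -⟩ := hq0
  exact Prod.ext (hv (fst_lt_of_mem_psiIndex hp) (fst_lt_of_mem_psiIndex hq) (hpb.trans hqb.symm))
    (hpk.trans hqk.symm)

theorem manhattanL_psiVec_le_of_stepsTo (hv : Set.InjOn v (Set.Iio ℓ)) :
    ∀ {n : ℕ} {σ π : List ℤ}, StepsTo n σ π → manhattanL (psiVec ℓ v m σ) (psiVec ℓ v m π) ≤ n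
  | 0, _, _, (h : _ = _) => by rw [h, manhattanL_self]
  | n + 1, σ, π, ⟨τ, hστ, hτπ⟩ =>
    calc manhattanL (psiVec ℓ v m σ) (psiVec ℓ v m π)
        ≤ manhattanL (psiVec ℓ v m σ) (psiVec ℓ v m τ)
          + manhattanL (psiVec ℓ v m τ) (psiVec ℓ v m π) :=
          manhattanL_triangle (length_psiVec ℓ v m σ τ) (length_psiVec ℓ v m τ π)
      _ ≤ 1 + n := Nat.add_le_add (manhattanL_psiVec_le_one_of_adjTrans m hv hστ)
          (manhattanL_psiVec_le_of_stepsTo hv hτπ)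
      _ = n + 1 := Nat.add_comm 1 n

end Psi

theorem stmt5_general (ℓ : ℕ) (v : ℕ → ℤ) (m : ℕ → ℕ)
    (hv : ∀ i j, i < j → j < ℓ → v i < v j)
    (σ π : List ℤ)
    (hσ : (↑σ : Multiset ℤ) = ∑ i ∈ Finset.range ℓ, Multiset.replicate (m i) (v i))
    (hπ : (↑π : Multiset ℤ) = ∑ i ∈ Finset.range ℓ, Multiset.replicate (m i) (v i)) :
    manhattanL
      ((((List.range ℓ).drop 1).map
        (fun i => (List.range (m i)).map (fun s => psiEntry σ (v i) s))).flatten)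
      ((((List.range ℓ).drop 1).map
        (fun i => (List.range (m i)).map (fun s => psiEntry π (v i) s))).flatten)
      ≤ dK σ π := by
  have hmono : StrictMonoOn v (Set.Iio ℓ) := fun i _ j hj hij => hv i j hij hj
  have hperm : σ.Perm π := Multiset.coe_eq_coe.mp (hσ.trans hπ.symm)
  exact manhattanL_psiVec_le_of_stepsTo m hmono.injOn (stepsTo_dK hperm)

/-- Lemma 5. For any two multi-permutations `σ, π ∈ S(M)`, the
Manhattan distance between their images under `ψ` (the concatenations of the blocks
`x_i = (x_{i,1}, …, x_{i,m_i})`, `i = 1, …, ℓ-1`) is at most their Kendall τ-distance: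
`d_M(ψ(σ), ψ(π)) ≤ d_K(σ, π)`. -/
theorem stmt5 (ℓ : ℕ) (v : ℕ → ℤ) (m : ℕ → ℕ)
    (hv : ∀ i j, i < j → j < ℓ → v i < v j)
    (hm : ∀ i, i < ℓ → 0 < m i)
    (σ π : List ℤ)
    (hσ : (↑σ : Multiset ℤ) = ∑ i ∈ Finset.range ℓ, Multiset.replicate (m i) (v i))
    (hπ : (↑π : Multiset ℤ) = ∑ i ∈ Finset.range ℓ, Multiset.replicate (m i) (v i)) :
    manhattanL
      ((((List.range ℓ).drop 1).map
        (fun i => (List.range (m i)).map (fun s => psiEntry σ (v i) s))).flatten)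
      ((((List.range ℓ).drop 1).map
        (fun i => (List.range (m i)).map (fun s => psiEntry π (v i) s))).flatten)
      ≤ dK σ π :=
  stmt5_general ℓ v m hv σ π hσ hπ
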